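/- (Hamming distance enumerator of BLC codes.) Let n, m be positive integers, h ∈ ℤ^n, a ∈ {0,…,m−1}, and let BLC := { x ∈ {0,1}^n | ∑_i h_i x_i ≡ a (mod m) }. Then ∑_{x ∈ BLC} ∑_{y ∈ BLC} z^{d_H(x,y)} = (1/m²) ∑_{j=0}^{m−1} ∑_{k=0}^{m−1} e(−a(j+k)/m) · ∏_{i=1}^{n} ( 1 + e(h_i j/m) z + e(h_i k/m) z + e(h_i (j+k)/m) ), as an identity of complex-valued functions of z ∈ ℂ. -/

import Mathlib

open Finset

noncomputable def ee (x : ℝ) : ℂ := Complex.exp (2 * Real.pi * Complex.I * x)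

/-- Hamming distance on `Fin n → Fin 2`. -/
def hammingDist' {n : ℕ} (x y : Fin n → Fin 2) : ℕ :=
  (Finset.univ.filter fun i => x i ≠ y i).card

lemma ee_zero : ee 0 = 1 := by simp [ee]

lemma ee_add (x y : ℝ) : ee (x + y) = ee x * ee y := by
  simp [ee, mul_add, Complex.exp_add]

lemma ee_int (k : ℤ) : ee k = 1 := by
  unfold ee
  rw [show (2 * Real.pi * Complex.I * ((k:ℝ):ℂ)) = k * (2 * Real.pi * Complex.I) by push_cast; ring]
  exact Complex.exp_int_mul_two_pi_mul_I k

lemma ee_nat_mul (j : ℕ) (x : ℝ) : ee ((j:ℝ) * x) = ee x ^ j := by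
  unfold ee
  rw [← Complex.exp_nat_mul]
  congr 1
  push_cast
  ring

lemma ee_sum {ι : Type*} (s : Finset ι) (f : ι → ℝ) :
    ee (∑ i ∈ s, f i) = ∏ i ∈ s, ee (f i) := by
  unfold ee
  rw [← Complex.exp_sum]
  congr 1
  push_cast
  rw [Finset.mul_sum]

lemma sum_ee (m : ℕ) (hm : 0 < m) (c : ℤ) :
    ∑ j ∈ Finset.range m, ee ((c : ℝ) * j / m) = if (m:ℤ) ∣ c then (m:ℂ) else 0 := by
  have hm' : (m:ℝ) ≠ 0 := Nat.cast_ne_zero.mpr hm.ne'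
  have hmC : (m:ℂ) ≠ 0 := Nat.cast_ne_zero.mpr hm.ne'
  have hterm : ∀ j : ℕ, ee ((c:ℝ) * j / m) = (ee ((c:ℝ)/m))^j := by
    intro j
    rw [← ee_nat_mul]
    congr 1
    ring
  rw [Finset.sum_congr rfl (fun j _ => hterm j)]
  split_ifs with hd
  · obtain ⟨d, rfl⟩ := hd
    have h1 : ee ((((m:ℤ)*d : ℤ):ℝ)/m) = 1 := by
      rw [show ((((m:ℤ)*d : ℤ):ℝ)/m) = ((d:ℤ):ℝ) by push_cast; field_simp]
      exact ee_int d
    push_cast at h1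
    simp [h1]
  · have hz1 : (ee ((c:ℝ)/m)) ^ m = 1 := by
      rw [← ee_nat_mul, show (m:ℝ) * ((c:ℝ)/m) = (c:ℝ) by field_simp]
      exact ee_int c
    have hne : ee ((c:ℝ)/m) ≠ 1 := by
      intro h1
      apply hd
      rw [ee, Complex.exp_eq_one_iff] at h1
      obtain ⟨k, hk⟩ := h1
      have h2pi : (2 * (Real.pi:ℂ) * Complex.I) ≠ 0 := Complex.two_pi_I_ne_zero
      have h2 : (c:ℂ) = (k:ℂ) * m := by
        field_simp at hk
        apply mul_right_cancel₀ h2pi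
        push_cast at hk
        rw [← hk, div_mul_cancel₀ _ hmC]
      have h3 : c = k * m := by exact_mod_cast h2
      exact ⟨k, by rw [h3, mul_comm]⟩
    rw [geom_sum_eq hne, hz1, sub_self, zero_div]

noncomputable def gg (m : ℕ) (hi : ℤ) (j k : ℕ) (z : ℂ) (p : Fin 2 × Fin 2) : ℂ :=
  ee ((hi:ℝ) * ((p.1:ℕ):ℝ) * j / m) * ee ((hi:ℝ) * ((p.2:ℕ):ℝ) * k / m)
    * z ^ (if p.1 ≠ p.2 then 1 else 0)

lemma factor (m : ℕ) (hi : ℤ) (j k : ℕ) (z : ℂ) :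
    (1 + ee ((hi : ℝ) * j / m) * z + ee ((hi : ℝ) * k / m) * z
      + ee ((hi : ℝ) * ((j:ℝ) + k) / m))
    = ∑ p : Fin 2 × Fin 2, gg m hi j k z p := by
  rw [Fintype.sum_prod_type]
  rw [show (hi:ℝ) * ((j:ℝ) + k) / m = (hi:ℝ) * j / m + (hi:ℝ) * k / m by ring, ee_add]
  simp [gg, Fin.sum_univ_two, ee_zero]
  ring

lemma expand (n m : ℕ) (h : Fin n → ℤ) (j k : ℕ) (z : ℂ) :
    ∏ i, (1 + ee ((h i : ℝ) * j / m) * z + ee ((h i : ℝ) * k / m) * z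
      + ee ((h i : ℝ) * ((j:ℝ) + k) / m))
    = ∑ x : Fin n → Fin 2, ∑ y : Fin n → Fin 2,
        ee (((∑ i, h i * (x i : ℤ) : ℤ):ℝ) * j / m)
          * ee (((∑ i, h i * (y i : ℤ) : ℤ):ℝ) * k / m) * z ^ hammingDist' x y := by
  calc ∏ i, (1 + ee ((h i : ℝ) * j / m) * z + ee ((h i : ℝ) * k / m) * z
      + ee ((h i : ℝ) * ((j:ℝ) + k) / m))
      = ∏ i, ∑ p ∈ (Finset.univ : Finset (Fin 2 × Fin 2)), gg m (h i) j k z p := by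
        exact Finset.prod_congr rfl fun i _ => factor m (h i) j k z
    _ = ∑ f ∈ Fintype.piFinset (fun _ : Fin n => (Finset.univ : Finset (Fin 2 × Fin 2))),
          ∏ i, gg m (h i) j k z (f i) := Finset.prod_univ_sum _ _
    _ = ∑ f : Fin n → Fin 2 × Fin 2, ∏ i, gg m (h i) j k z (f i) := by
        rw [Fintype.piFinset_univ]
    _ = ∑ xy : (Fin n → Fin 2) × (Fin n → Fin 2), ∏ i, gg m (h i) j k z (xy.1 i, xy.2 i) := by
        apply Fintype.sum_equiv (Equiv.arrowProdEquivProdArrow (Fin n) (fun _ => Fin 2) (fun _ => Fin 2))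
        intro f
        rfl
    _ = ∑ x : Fin n → Fin 2, ∑ y : Fin n → Fin 2, ∏ i, gg m (h i) j k z (x i, y i) :=
        Fintype.sum_prod_type (f := fun (xy : (Fin n → Fin 2) × (Fin n → Fin 2)) => ∏ i, gg m (h i) j k z (xy.1 i, xy.2 i))
    _ = _ := by
        refine Finset.sum_congr rfl fun x _ => Finset.sum_congr rfl fun y _ => ?_
        unfold gg
        rw [Finset.prod_mul_distrib, Finset.prod_mul_distrib]
        congr 1
        · congr 1
          · rw [← ee_sum]
            congr 1
            push_cast
            rw [Finset.sum_mul, Finset.sum_div]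
          · rw [← ee_sum]
            congr 1
            push_cast
            rw [Finset.sum_mul, Finset.sum_div]
        · rw [Finset.prod_pow_eq_pow_sum]
          congr 1
          rw [hammingDist', Finset.card_filter]

theorem blc_distance_enumerator (n m : ℕ) (hn : 0 < n) (hm : 0 < m)
    (h : Fin n → ℤ) (a : ℕ) (ha : a < m)
    (BLC : Finset (Fin n → Fin 2))
    (hBLC : BLC = Finset.univ.filter fun x => (∑ i, h i * (x i : ℤ)) ≡ (a : ℤ) [ZMOD m])
    (z : ℂ) :
    ∑ x ∈ BLC, ∑ y ∈ BLC, z ^ hammingDist' x y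
      = (1 / (m : ℂ) ^ 2) * ∑ j ∈ Finset.range m, ∑ k ∈ Finset.range m,
          ee (-( (a : ℝ) * ((j : ℝ) + k)) / m) *
            ∏ i, (1 + ee ((h i : ℝ) * j / m) * z + ee ((h i : ℝ) * k / m) * z
              + ee ((h i : ℝ) * ((j : ℝ) + k) / m)) := by
  have hmC : (m:ℂ) ≠ 0 := Nat.cast_ne_zero.mpr hm.ne'
  set S : (Fin n → Fin 2) → ℤ := fun x => ∑ i, h i * (x i : ℤ) with hS
  set T : (Fin n → Fin 2) → ℕ → ℂ := fun x j => ee (((S x - a : ℤ):ℝ) * j / m) with hT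
  have hPD : ∀ x, ((S x ≡ (a:ℤ) [ZMOD m]) ↔ (m:ℤ) ∣ (S x - a)) := by
    intro x
    rw [Int.modEq_iff_dvd, dvd_sub_comm]
  -- Step 1: rewrite RHS double sum
  have step1 : ∀ j ∈ Finset.range m, ∀ k ∈ Finset.range m,
      ee (-( (a : ℝ) * ((j : ℝ) + k)) / m) *
        ∏ i, (1 + ee ((h i : ℝ) * j / m) * z + ee ((h i : ℝ) * k / m) * z
          + ee ((h i : ℝ) * ((j : ℝ) + k) / m))
      = ∑ x : Fin n → Fin 2, ∑ y : Fin n → Fin 2, T x j * T y k * z ^ hammingDist' x y := by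
    intro j _ k _
    rw [expand n m h j k z, Finset.mul_sum]
    refine Finset.sum_congr rfl fun x _ => ?_
    rw [Finset.mul_sum]
    refine Finset.sum_congr rfl fun y _ => ?_
    have : ee (-( (a : ℝ) * ((j : ℝ) + k)) / m) * ee (((S x : ℤ):ℝ) * j / m)
        * ee (((S y : ℤ):ℝ) * k / m) = T x j * T y k := by
      rw [← ee_add, ← ee_add, hT, ← ee_add]
      congr 1
      push_cast
      ring
    calc ee (-( (a : ℝ) * ((j : ℝ) + k)) / m) *
          (ee (((S x : ℤ):ℝ) * j / m) * ee (((S y : ℤ):ℝ) * k / m) * z ^ hammingDist' x y)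
        = (ee (-( (a : ℝ) * ((j : ℝ) + k)) / m) * ee (((S x : ℤ):ℝ) * j / m)
            * ee (((S y : ℤ):ℝ) * k / m)) * z ^ hammingDist' x y := by ring
      _ = T x j * T y k * z ^ hammingDist' x y := by rw [this]
  rw [Finset.sum_congr rfl (fun j hj => Finset.sum_congr rfl (fun k hk => step1 j hj k hk))]
  -- Step 2: swap sums
  have step2 : ∑ j ∈ Finset.range m, ∑ k ∈ Finset.range m, ∑ x : Fin n → Fin 2,
        ∑ y : Fin n → Fin 2, T x j * T y k * z ^ hammingDist' x y
      = ∑ x : Fin n → Fin 2, ∑ y : Fin n → Fin 2,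
          (∑ j ∈ Finset.range m, T x j) * (∑ k ∈ Finset.range m, T y k) * z ^ hammingDist' x y := by
    calc ∑ j ∈ Finset.range m, ∑ k ∈ Finset.range m, ∑ x : Fin n → Fin 2,
          ∑ y : Fin n → Fin 2, T x j * T y k * z ^ hammingDist' x y
        = ∑ j ∈ Finset.range m, ∑ x : Fin n → Fin 2, ∑ k ∈ Finset.range m,
            ∑ y : Fin n → Fin 2, T x j * T y k * z ^ hammingDist' x y :=
          Finset.sum_congr rfl fun j _ => Finset.sum_comm
      _ = ∑ x : Fin n → Fin 2, ∑ j ∈ Finset.range m, ∑ k ∈ Finset.range m,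
            ∑ y : Fin n → Fin 2, T x j * T y k * z ^ hammingDist' x y := Finset.sum_comm
      _ = ∑ x : Fin n → Fin 2, ∑ j ∈ Finset.range m, ∑ y : Fin n → Fin 2,
            ∑ k ∈ Finset.range m, T x j * T y k * z ^ hammingDist' x y :=
          Finset.sum_congr rfl fun x _ => Finset.sum_congr rfl fun j _ => Finset.sum_comm
      _ = ∑ x : Fin n → Fin 2, ∑ y : Fin n → Fin 2, ∑ j ∈ Finset.range m,
            ∑ k ∈ Finset.range m, T x j * T y k * z ^ hammingDist' x y :=
          Finset.sum_congr rfl fun x _ => Finset.sum_comm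
      _ = _ := by
          refine Finset.sum_congr rfl fun x _ => Finset.sum_congr rfl fun y _ => ?_
          rw [Finset.sum_mul_sum, Finset.sum_mul]
          refine Finset.sum_congr rfl fun j _ => ?_
          rw [Finset.sum_mul]
  rw [step2]
  -- Step 3: indicator sums
  have ind : ∀ x : Fin n → Fin 2, ∑ j ∈ Finset.range m, T x j
      = if (m:ℤ) ∣ (S x - a) then (m:ℂ) else 0 := fun x => sum_ee m hm (S x - a)
  -- LHS
  subst hBLC
  simp only [Finset.sum_filter]
  rw [Finset.mul_sum]
  refine Finset.sum_congr rfl fun x _ => ?_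
  rw [Finset.mul_sum]
  by_cases hx : S x ≡ (a:ℤ) [ZMOD m]
  · simp only [hx, show (∑ i, h i * (x i : ℤ)) ≡ (a:ℤ) [ZMOD m] from hx, if_true]
    refine Finset.sum_congr rfl fun y _ => ?_
    by_cases hy : S y ≡ (a:ℤ) [ZMOD m]
    · rw [if_pos hy, ind x, ind y, if_pos ((hPD x).mp hx), if_pos ((hPD y).mp hy)]
      field_simp
    · rw [if_neg hy, ind y, if_neg (fun hd => hy ((hPD y).mpr hd))]
      ring
  · have hx' : ¬ (m:ℤ) ∣ (S x - a) := fun hd => hx ((hPD x).mpr hd)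
    rw [if_neg hx]
    symm
    rw [Finset.sum_eq_zero]
    intro y _
    rw [ind x, if_neg hx']
    ring
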